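/- Exact Gaussian mass of L_q: Let f(x) = exp(−πx²) be the Gaussian, extended multiplicatively to ℝ². For any real s > 0 and positive integer q, let ε' := ε_{ℤ, q/(s√2)} be the roughness of ℤ at parameter q/(s√2) and ε̃ := ε_{L_q,s}(H) be the H-roughness of L_q := ∪_{z∈ℤ}((z,z) + qℤ²) for H = span{(1,1)}. Then f_s(L_q) = (s/√2)·(1+ε')·(1+ε̃). -/

import Mathlib

noncomputable section

open MeasureTheory

/-- The Gaussian function `f(x) = exp(-πx²)`. -/
def gauss (x : ℝ) : ℝ := Real.exp (-(Real.pi * x ^ 2))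

/-- The lattice `L_q = ∪_{z∈ℤ} ((z,z) + qℤ²) ⊂ ℝ²`. -/
def LqSet (q : ℕ) : Set (ℝ × ℝ) :=
  {v | ∃ z w₁ w₂ : ℤ, v.1 = z + q * w₁ ∧ v.2 = z + q * w₂}

/-- `f_s(L_q)`: the sum over `L_q` of the multiplicative extension of `f` to `ℝ²`,
scaled by `s` (i.e. `f_s(x) = f(x/s)`). -/
def fsLq (f : ℝ → ℝ) (s : ℝ) (q : ℕ) : ℝ :=
  ∑' v : LqSet q, f ((v : ℝ × ℝ).1 / s) * f ((v : ℝ × ℝ).2 / s)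

/-- The Fourier transform of a real-valued function on ℝ. -/
def ft1 (g : ℝ → ℝ) (w : ℝ) : ℂ :=
  ∫ x : ℝ, (g x : ℂ) * Complex.exp (-(2 * Real.pi * Complex.I) * x * w)

/-- The Fourier transform of a real-valued function on ℝ². -/
def ft2 (g : ℝ × ℝ → ℝ) (w : ℝ × ℝ) : ℂ :=
  ∫ x : ℝ × ℝ, (g x : ℂ) * Complex.exp (-(2 * Real.pi * Complex.I) * (x.1 * w.1 + x.2 * w.2))

/-- The roughness `ε_{ℤ,t} = f̂_t(ℤ \ {0}) / f̂_t(0)` of the integer lattice (self-dual)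
at parameter `t`, for the Gaussian `f`. -/
def roughZ (t : ℝ) : ℝ :=
  (∑' k : {k : ℤ // k ≠ 0}, (ft1 (fun x => gauss (x / t)) ((k : ℤ) : ℝ)).re) /
    (ft1 (fun x => gauss (x / t)) 0).re

/-- The line `H = span{(1,1)} ⊂ ℝ²`. -/
def Hline : Set (ℝ × ℝ) := {v | ∃ a : ℝ, v = (a, a)}

/-- The orthogonal complement `H^⊥` of `H = span{(1,1)}`. -/
def Hperp : Set (ℝ × ℝ) := {w | ∀ v ∈ Hline, v.1 * w.1 + v.2 * w.2 = 0}

/-- The dual lattice of `L_q`. -/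
def dualLq (q : ℕ) : Set (ℝ × ℝ) :=
  {w | ∀ v ∈ LqSet q, ∃ k : ℤ, v.1 * w.1 + v.2 * w.2 = (k : ℝ)}

/-- The `H`-roughness `ε_{L_q,s}(H) = f̂_s(L_q^* \ H^⊥) / f̂_s(L_q^* ∩ H^⊥)` of `L_q`
for `H = span{(1,1)}`, for the Gaussian `f` extended multiplicatively to ℝ². -/
def roughLqH (q : ℕ) (s : ℝ) : ℝ :=
  (∑' w : ↥(dualLq q \ Hperp),
      (ft2 (fun v => gauss (v.1 / s) * gauss (v.2 / s)) (w : ℝ × ℝ)).re) /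
    (∑' w : ↥(dualLq q ∩ Hperp),
      (ft2 (fun v => gauss (v.1 / s) * gauss (v.2 / s)) (w : ℝ × ℝ)).re)

/-!
Parametrise `L_q` by `(z, w) ↦ (z, z + q w)`. Poisson summation in `w` and then in `z` shows that
the Gaussian sum over `L_q` at scale `s` is `s² / q` times the Gaussian sum at scale `1 / s` over
the dual lattice `L_q^* = {(c, d) / q : q ∣ c + d}`, which is the image of `L_q` under
`(x, y) ↦ (-x / q, y / q)`. Splitting `L_q^*` along `H^⊥` produces the factor `1 + ε̃`, and the part
in `H^⊥`, namely `ℤ (-1, 1) / q`, is a one-dimensional theta sum, which one-dimensional Poisson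
summation identifies with `q / (s√2) · (1 + ε')`.
-/

open Real Complex FourierTransform

lemma gauss_pos (x : ℝ) : 0 < gauss x := Real.exp_pos _

lemma gauss_neg (x : ℝ) : gauss (-x) = gauss x := by
  simp [gauss]

lemma gauss_sqrt_two_mul (x : ℝ) : gauss (√2 * x) = gauss x ^ 2 := by
  rw [gauss, gauss, ← Real.exp_nat_mul, mul_pow, Real.sq_sqrt zero_le_two]
  push_cast
  ring_nf

lemma ofReal_gauss (x : ℝ) : (gauss x : ℂ) = cexp (-π * x ^ 2) := by
  simp [gauss, Complex.ofReal_exp]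

lemma summable_gauss_mul_int {a : ℝ} (ha : a ≠ 0) : Summable fun n : ℤ => gauss (a * n) := by
  simpa [gauss, mul_pow] using
    summable_pow_mul_jacobiTheta₂_term_bound 0 (pow_pos (abs_pos.2 ha) 2) 0

lemma summable_gauss_mul_int_prod {a b : ℝ} (ha : a ≠ 0) (hb : b ≠ 0) :
    Summable fun p : ℤ × ℤ => gauss (a * p.1) * gauss (b * p.2) :=
  (summable_gauss_mul_int ha).mul_of_nonneg (summable_gauss_mul_int hb)
    (fun _ => (gauss_pos _).le) (fun _ => (gauss_pos _).le)

lemma tsum_gauss_mul_int_pos {a : ℝ} (ha : a ≠ 0) : 0 < ∑' n : ℤ, gauss (a * n) :=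
  (summable_gauss_mul_int ha).tsum_pos (fun _ => (gauss_pos _).le) 0 (gauss_pos _)

lemma ft1_eq_fourier (g : ℝ → ℝ) : ft1 g = 𝓕 (fun x => (g x : ℂ)) := by
  ext w
  rw [ft1, Real.fourier_real_eq_integral_exp_smul]
  congr 1 with x
  rw [smul_eq_mul, mul_comm]
  congr 2
  push_cast
  ring

lemma ft2_mul (g h : ℝ → ℝ) (w : ℝ × ℝ) :
    ft2 (fun v => g v.1 * h v.2) w = ft1 g w.1 * ft1 h w.2 := by
  rw [ft2, ft1, ft1, Measure.volume_eq_prod, ← integral_prod_mul]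
  congr 1 with x
  rw [mul_mul_mul_comm, ← Complex.exp_add]
  push_cast
  ring_nf

lemma ft1_gauss_div {t : ℝ} (ht : 0 < t) (w : ℝ) :
    ft1 (fun x => gauss (x / t)) w = (t * gauss (t * w) : ℝ) := by
  have hre : 0 < ((t ^ 2)⁻¹ : ℂ).re := by
    rw [← Complex.ofReal_pow, ← Complex.ofReal_inv, Complex.ofReal_re]
    positivity
  have hsqrt : ((t ^ 2)⁻¹ : ℂ) ^ (1 / 2 : ℂ) = (t : ℂ)⁻¹ := by
    rw [← inv_pow, one_div, Complex.sq_cpow_two_inv]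
    rw [← Complex.ofReal_inv, Complex.ofReal_re]
    positivity
  have hgauss :
      (fun x : ℝ => (gauss (x / t) : ℂ)) = fun x : ℝ => cexp (-π * ((t : ℂ) ^ 2)⁻¹ * x ^ 2) := by
    ext x
    rw [ofReal_gauss]
    push_cast
    field_simp
  rw [ft1_eq_fourier, hgauss, fourier_gaussian_pi hre, hsqrt, ofReal_mul, ofReal_gauss]
  push_cast
  field_simp

lemma ft2_gauss_div {t : ℝ} (ht : 0 < t) (w : ℝ × ℝ) :
    ft2 (fun v => gauss (v.1 / t) * gauss (v.2 / t)) w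
      = (t ^ 2 * (gauss (t * w.1) * gauss (t * w.2)) : ℝ) := by
  rw [ft2_mul (fun x => gauss (x / t)) (fun x => gauss (x / t)), ft1_gauss_div ht,
    ft1_gauss_div ht]
  push_cast
  ring

lemma tsum_gauss_mul_cexp {t : ℝ} (ht : 0 < t) (x : ℝ) :
    ∑' n : ℤ, (gauss (t * n) : ℂ) * cexp (↑(-2 * π * x * n) * I)
      = (t⁻¹ * ∑' n : ℤ, gauss ((n + x) / t) : ℝ) := by
  have hre : 0 < ((t : ℂ) ^ 2).re := by
    rw [← Complex.ofReal_pow, Complex.ofReal_re]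
    positivity
  have key := Complex.tsum_exp_neg_quadratic hre (-I * x)
  rw [one_div (2 : ℂ), Complex.sq_cpow_two_inv (by rwa [Complex.ofReal_re])] at key
  push_cast
  convert key using 1
  · congr 1 with n
    rw [ofReal_gauss, ← Complex.exp_add]
    push_cast
    ring_nf
  · rw [one_div]
    congr 1
    refine tsum_congr fun n => ?_
    rw [ofReal_gauss, show I * (-I * x) = (x : ℂ) by linear_combination (-(x : ℂ)) * I_sq]
    congr 1
    push_cast
    field_simp

lemma tsum_gauss_mul_int {t : ℝ} (ht : 0 < t) :
    ∑' n : ℤ, gauss (t * n) = t⁻¹ * ∑' n : ℤ, gauss (n / t) := by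
  have h := tsum_gauss_mul_cexp ht 0
  simp only [ofReal_zero, mul_zero, zero_mul, Complex.exp_zero, mul_one, add_zero] at h
  exact_mod_cast h

lemma one_add_roughZ {t : ℝ} (ht : 0 < t) : 1 + roughZ t = ∑' k : ℤ, gauss (t * k) := by
  have hgauss0 : gauss 0 = 1 := by simp [gauss]
  simp_rw [roughZ, ft1_gauss_div ht, ofReal_re, tsum_mul_left, mul_zero, hgauss0, mul_one,
    mul_div_cancel_left₀ _ ht.ne']
  rw [← (summable_gauss_mul_int ht.ne').tsum_subtype_add_tsum_subtype_compl {0}]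
  simp [hgauss0]
  rfl

def lqParam (q : ℕ) (p : ℤ × ℤ) : ℝ × ℝ := (p.1, p.1 + q * p.2)

/-- `∑_{v ∈ L_q} f(a v)`, summed along the parametrisation `lqParam q` of `L_q`. -/
def thetaLq (q : ℕ) (a : ℝ) : ℝ :=
  ∑' p : ℤ × ℤ, gauss (a * p.1) * gauss (a * (p.1 + q * p.2))

lemma injective_lqParam {q : ℕ} (hq : q ≠ 0) : Function.Injective (lqParam q) := by
  rintro ⟨z, w⟩ ⟨z', w'⟩ h
  simp only [lqParam, Prod.mk.injEq, Int.cast_inj] at h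
  obtain ⟨rfl, h⟩ := h
  simpa [hq] using h

lemma summable_thetaLq {q : ℕ} (hq : q ≠ 0) {a : ℝ} (ha : a ≠ 0) :
    Summable fun p : ℤ × ℤ => gauss (a * p.1) * gauss (a * (p.1 + q * p.2)) := by
  have hinj : Function.Injective fun p : ℤ × ℤ => (p.1, p.1 + q * p.2) := by
    intro p p' h
    apply injective_lqParam hq
    simpa [lqParam] using congr_arg (fun p : ℤ × ℤ => ((p.1 : ℝ), (p.2 : ℝ))) h
  refine ((summable_gauss_mul_int_prod ha ha).comp_injective hinj).congr fun p => ?_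
  simp

lemma thetaLq_eq_tsum_tsum {q : ℕ} (hq : q ≠ 0) {a : ℝ} (ha : a ≠ 0) :
    thetaLq q a = ∑' z : ℤ, gauss (a * z) * ∑' w : ℤ, gauss (a * (z + q * w)) := by
  simp_rw [thetaLq, (summable_thetaLq hq ha).tsum_prod, tsum_mul_left]

lemma summable_gauss_mul_gauss_mul_cexp {a b : ℝ} (ha : a ≠ 0) (hb : b ≠ 0)
    (φ : ℤ → ℤ → ℝ) :
    Summable fun p : ℤ × ℤ => (gauss (a * p.1) : ℂ) * (gauss (b * p.2) * cexp (φ p.1 p.2 * I)) :=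
  Summable.of_norm <| (summable_gauss_mul_int_prod ha hb).congr fun p => by
    simp [Complex.norm_exp_ofReal_mul_I, abs_of_pos (gauss_pos _)]

lemma tsum_gauss_mul_add_mul_int {a q : ℝ} (ha : 0 < a) (hq : 0 < q) (x : ℝ) :
    ((∑' w : ℤ, gauss (a * (x + q * w)) : ℝ) : ℂ)
      = (((q * a)⁻¹ : ℝ) : ℂ) *
          ∑' k : ℤ, gauss ((q * a)⁻¹ * k) * cexp (↑(-2 * π * (x * k / q)) * I) := by
  have hb : 0 < (q * a)⁻¹ := by positivity
  have hS : ∑' w : ℤ, gauss (a * (x + q * w)) = ∑' w : ℤ, gauss ((w + x / q) / (q * a)⁻¹) :=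
    tsum_congr fun w => by
      field_simp
      ring_nf
  rw [hS, ← mul_inv_cancel_left₀ hb.ne' (∑' w : ℤ, _), ofReal_mul, ← tsum_gauss_mul_cexp hb]
  congr 1
  refine tsum_congr fun k => ?_
  ring_nf

lemma tsum_gauss_mul_int_mul_cexp {a q : ℝ} (ha : 0 < a) (hq : q ≠ 0) (y : ℝ) :
    ∑' z : ℤ, (gauss (a * z) : ℂ) * cexp (↑(-2 * π * (z * y / q)) * I)
      = a⁻¹ * ∑' m : ℤ, gauss ((q * a)⁻¹ * (y + q * m)) := by
  have hphase (z : ℤ) : -2 * π * (z * y / q) = -2 * π * (y / q) * z := by ring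
  simp_rw [hphase, tsum_gauss_mul_cexp ha, ← ofReal_mul]
  refine congr_arg _ (congr_arg _ (tsum_congr fun m => ?_))
  field_simp
  ring_nf

theorem thetaLq_poisson {q : ℕ} (hq : 0 < q) {a : ℝ} (ha : 0 < a) :
    thetaLq q a = (q * a ^ 2)⁻¹ * thetaLq q (q * a)⁻¹ := by
  set b := ((q : ℝ) * a)⁻¹ with hb_def
  have hb : 0 < b := by positivity
  let phase (z k : ℤ) : ℂ := cexp (↑(-2 * π * (z * k / q)) * I)
  have swap := Summable.tsum_comm
    (f := fun z k : ℤ => (gauss (a * z) : ℂ) * (gauss (b * k) * phase z k))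
    (summable_gauss_mul_gauss_mul_cexp ha.ne' hb.ne' fun z k => -2 * π * (z * k / q))
  have hθ : thetaLq q a = b * a⁻¹ * thetaLq q b := by
    apply Complex.ofReal_injective
    calc (thetaLq q a : ℂ)
        = ∑' z : ℤ, (gauss (a * z) : ℂ) * ((∑' w : ℤ, gauss (a * (z + q * w)) : ℝ) : ℂ) := by
          rw [thetaLq_eq_tsum_tsum hq.ne' ha.ne', ofReal_tsum]
          push_cast
          rfl
      _ = b * ∑' z : ℤ, ∑' k : ℤ, (gauss (a * z) : ℂ) * (gauss (b * k) * phase z k) := by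
          rw [← tsum_mul_left]
          refine tsum_congr fun z => ?_
          rw [tsum_gauss_mul_add_mul_int ha (Nat.cast_pos.2 hq), mul_left_comm, tsum_mul_left]
      _ = b * ∑' k : ℤ, gauss (b * k) * ∑' z : ℤ, (gauss (a * z) : ℂ) * phase z k := by
          rw [← swap]
          congr 1
          refine tsum_congr fun k => ?_
          rw [← tsum_mul_left]
          exact tsum_congr fun z => by ring
      _ = ((b * a⁻¹ * thetaLq q b : ℝ) : ℂ) := by
          simp_rw [phase, tsum_gauss_mul_int_mul_cexp ha (Nat.cast_ne_zero.2 hq.ne'),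
            thetaLq_eq_tsum_tsum hq.ne' hb.ne', mul_left_comm _ ((a⁻¹ : ℝ) : ℂ),
            tsum_mul_left]
          push_cast
          ring
  rw [hθ, hb_def]
  field_simp

lemma LqSet_eq_range (q : ℕ) : LqSet q = Set.range (lqParam q) := by
  ext v
  constructor
  · rintro ⟨z, w₁, w₂, h₁, h₂⟩
    refine ⟨(z + q * w₁, w₂ - w₁), Prod.ext ?_ ?_⟩ <;> simp only [lqParam] <;> push_cast [h₁, h₂]
      <;> ring
  · rintro ⟨p, rfl⟩
    exact ⟨p.1, 0, p.2, by simp [lqParam], rfl⟩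

lemma fsLq_gauss_eq_thetaLq {q : ℕ} (hq : q ≠ 0) (s : ℝ) : fsLq gauss s q = thetaLq q s⁻¹ := by
  rw [fsLq, LqSet_eq_range, tsum_range (fun v : ℝ × ℝ => gauss (v.1 / s) * gauss (v.2 / s))
    (injective_lqParam hq)]
  simp_rw [thetaLq, lqParam, div_eq_inv_mul]

lemma mem_Hperp_iff {w : ℝ × ℝ} : w ∈ Hperp ↔ w.1 + w.2 = 0 := by
  constructor
  · intro h
    simpa using h (1, 1) ⟨1, rfl⟩
  · rintro h _ ⟨a, rfl⟩
    linear_combination a * h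

def dualLqParam (q : ℕ) (p : ℤ × ℤ) : ℝ × ℝ := (-p.1 / q, (p.1 + q * p.2) / q)

lemma dualLq_eq_range {q : ℕ} (hq : q ≠ 0) : dualLq q = Set.range (dualLqParam q) := by
  have hq' : (q : ℝ) ≠ 0 := by exact_mod_cast hq
  ext w
  constructor
  · intro hw
    obtain ⟨c, hc⟩ := hw (q, 0) ⟨0, 1, 0, by simp, by simp⟩
    obtain ⟨e, he⟩ := hw (1, 1) ⟨1, 0, 0, by simp, by simp⟩
    simp only [zero_mul, add_zero, one_mul] at hc he
    refine ⟨(-c, e), Prod.ext ?_ ?_⟩ <;> simp only [dualLqParam] <;>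
      rw [div_eq_iff hq'] <;> push_cast
    · linear_combination -hc
    · linear_combination hc - (q : ℝ) * he
  · rintro ⟨p, rfl⟩ v ⟨z, w₁, w₂, h₁, h₂⟩
    refine ⟨z * p.2 + w₂ * p.1 - w₁ * p.1 + q * w₂ * p.2, ?_⟩
    rw [h₁, h₂]
    simp only [dualLqParam]
    push_cast
    field_simp
    ring

lemma injective_dualLqParam {q : ℕ} (hq : q ≠ 0) : Function.Injective (dualLqParam q) := by
  have hq' : (q : ℝ) ≠ 0 := by exact_mod_cast hq
  intro p p' h
  apply injective_lqParam hq
  simp only [dualLqParam, lqParam, Prod.mk.injEq, div_left_inj' hq', neg_inj] at h ⊢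
  exact h

lemma dualLq_inter_Hperp_eq_range {q : ℕ} (hq : q ≠ 0) :
    dualLq q ∩ Hperp = Set.range fun c : ℤ => ((-c / q : ℝ), (c / q : ℝ)) := by
  have hq' : (q : ℝ) ≠ 0 := by exact_mod_cast hq
  ext w
  rw [dualLq_eq_range hq, Set.mem_inter_iff, mem_Hperp_iff]
  constructor
  · rintro ⟨⟨p, rfl⟩, hw⟩
    have hp : (p.2 : ℝ) = 0 := by
      simp only [dualLqParam] at hw
      field_simp at hw
      simpa [hq'] using hw
    exact ⟨p.1, by simp [dualLqParam, hp]⟩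
  · rintro ⟨c, rfl⟩
    exact ⟨⟨(c, 0), by simp [dualLqParam]⟩, by ring⟩

lemma gauss_mul_gauss_dualLqParam (q : ℕ) (s : ℝ) (p : ℤ × ℤ) :
    gauss (s * (dualLqParam q p).1) * gauss (s * (dualLqParam q p).2)
      = gauss (s / q * p.1) * gauss (s / q * (p.1 + q * p.2)) := by
  rw [dualLqParam, ← gauss_neg (s / q * p.1)]
  congr 2 <;> ring

lemma tsum_dualLq_gauss {q : ℕ} (hq : q ≠ 0) (s : ℝ) :
    ∑' w : dualLq q, gauss (s * (w : ℝ × ℝ).1) * gauss (s * (w : ℝ × ℝ).2)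
      = thetaLq q (s / q) := by
  rw [dualLq_eq_range hq, tsum_range (fun w : ℝ × ℝ => gauss (s * w.1) * gauss (s * w.2))
    (injective_dualLqParam hq)]
  exact tsum_congr (gauss_mul_gauss_dualLqParam q s)

lemma summable_dualLq_gauss {q : ℕ} (hq : q ≠ 0) {s : ℝ} (hs : s ≠ 0) :
    Summable fun w : dualLq q => gauss (s * (w : ℝ × ℝ).1) * gauss (s * (w : ℝ × ℝ).2) := by
  rw [dualLq_eq_range hq]
  refine (Equiv.ofInjective _ (injective_dualLqParam hq)).summable_iff.1 ?_
  exact (summable_thetaLq hq (div_ne_zero hs (Nat.cast_ne_zero.2 hq))).congr fun p =>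
    (gauss_mul_gauss_dualLqParam q s p).symm

lemma tsum_dualLq_inter_Hperp_gauss {q : ℕ} (hq : q ≠ 0) (s : ℝ) :
    ∑' w : ↥(dualLq q ∩ Hperp), gauss (s * (w : ℝ × ℝ).1) * gauss (s * (w : ℝ × ℝ).2)
      = ∑' c : ℤ, gauss (√2 * s / q * c) := by
  rw [dualLq_inter_Hperp_eq_range hq,
    tsum_range (fun w : ℝ × ℝ => gauss (s * w.1) * gauss (s * w.2))
      (fun c c' h => by simpa [hq] using congr_arg Prod.snd h)]
  refine tsum_congr fun c => ?_
  dsimp only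
  rw [neg_div, mul_neg, gauss_neg, ← sq, ← gauss_sqrt_two_mul]
  congr 1
  ring

lemma tsum_diff_add_tsum_inter {α β : Type*} [AddCommGroup α] [UniformSpace α]
    [IsUniformAddGroup α] [CompleteSpace α] [T2Space α] {f : β → α} {s : Set β} (t : Set β)
    (hf : Summable fun x : s => f x) :
    ∑' x : ↥(s \ t), f x + ∑' x : ↥(s ∩ t), f x = ∑' x : s, f x := by
  have hdiff : Summable fun x : ↥(s \ t) => f x :=
    hf.comp_injective (Set.inclusion_injective Set.sdiff_subset)
  have hinter : Summable fun x : ↥(s ∩ t) => f x :=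
    hf.comp_injective (Set.inclusion_injective Set.inter_subset_left)
  rw [← Summable.tsum_union_disjoint (f := f) Set.disjoint_sdiff_inter hdiff hinter,
    Set.sdiff_union_inter]

lemma one_add_roughLqH {q : ℕ} (hq : q ≠ 0) {s : ℝ} (hs : 0 < s) :
    1 + roughLqH q s = thetaLq q (s / q) / ∑' c : ℤ, gauss (√2 * s / q * c) := by
  have hB := tsum_gauss_mul_int_pos (a := √2 * s / q) (by positivity)
  simp_rw [roughLqH, ft2_gauss_div hs, ofReal_re, tsum_mul_left]
  have hs2 : s ^ 2 ≠ 0 := by positivity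
  rw [mul_div_mul_left _ _ hs2, ← tsum_dualLq_gauss hq,
    ← tsum_diff_add_tsum_inter (f := fun w : ℝ × ℝ => gauss (s * w.1) * gauss (s * w.2)) Hperp
      (summable_dualLq_gauss hq hs.ne'),
    tsum_dualLq_inter_Hperp_gauss hq, add_div, div_self hB.ne', add_comm]

/-- Exact Gaussian mass of `L_q`:
`f_s(L_q) = (s/√2)·(1 + ε_{ℤ,q/(s√2)})·(1 + ε_{L_q,s}(H))`. -/
theorem gaussian_mass_Lq (s : ℝ) (hs : 0 < s) (q : ℕ) (hq : 0 < q) :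
    fsLq gauss s q =
      s / Real.sqrt 2 * (1 + roughZ (q / (s * Real.sqrt 2))) * (1 + roughLqH q s) := by
  have hB := tsum_gauss_mul_int_pos (a := √2 * s / q) (by positivity)
  have hdual : (q * s⁻¹)⁻¹ = s / q := by field_simp
  have hZ : ∑' k : ℤ, gauss (k / (q / (s * √2))) = ∑' c : ℤ, gauss (√2 * s / q * c) :=
    tsum_congr fun k => by field_simp
  rw [fsLq_gauss_eq_thetaLq hq.ne', thetaLq_poisson hq (inv_pos.2 hs), hdual,
    one_add_roughZ (by positivity), tsum_gauss_mul_int (by positivity), hZ,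
    one_add_roughLqH hq.ne' hs]
  generalize ∑' c : ℤ, gauss (√2 * s / q * c) = B at hB ⊢
  field_simp
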